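/- Let α ∈ (1/2, 1], T > 0 and K > 0. Let f : ℝ^n → L(ℝ^d, ℝ^n) be bounded and twice continuously differentiable with bounded first and second derivatives. Let X, X̃ : [0,T] → ℝ^d be α-Hölder continuous with ‖X‖_α ≤ K and ‖X̃‖_α ≤ K, let y, ỹ ∈ ℝ^n, and let Y and Ỹ be the solutions in Davie's sense of the Young differential equations Y_t = y + ∫_0^t f(Y_s) dX_s and Ỹ_t = ỹ + ∫_0^t f(Ỹ_s) dX̃_s on [0,T], respectively. Then for every α̃ ∈ (1/2, α) there exists a constant C_K > 0, depending only on α̃, α, T, ‖f‖_{C_b²} and K, such that ‖Y − Ỹ‖_{α̃} ≤ C_K (|y − ỹ| + ‖X − X̃‖_{α̃}). -/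

import Mathlib

/-!
On an interval `[a, b]` the Davie remainder `R_{s,t} = Y_t - Y_s - f(Y_s) X_{s,t}` satisfies
`R_{s,t} = R_{s,m} + R_{m,t} + (f(Y_m) - f(Y_s)) X_{m,t}`, and the last term is controlled by the
`α`-Hölder constant of `Y`. The dyadic sewing lemma turns this into a bound on `R` in terms of that
constant, which for `b - a` small is a contraction: this gives an a priori `α`-Hölder bound for `Y`
and `Ỹ` that does not depend on their Davie constants. The same argument for `R - R̃`, using a
second-order Taylor bound on `f`, shows that the `α̃`-Hölder constant of `Y - Ỹ` on a short
interval is at most a multiple of `|Y_a - Ỹ_a| + ‖X - X̃‖_{α̃}`. A discrete Grönwall argument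
along a chain of short intervals bounds `sup |Y - Ỹ|`, and this together with the local Hölder
bounds gives the Hölder bound on `[0, T]`.
-/

open Set Filter Topology

theorem le_of_forall_le_add_pow_mul {v C M ε : ℝ} (hε₀ : 0 ≤ ε) (hε₁ : ε < 1)
    (h : ∀ k : ℕ, v ≤ C + ε ^ k * M) : v ≤ C := by
  have hlim : Tendsto (fun k : ℕ => C + ε ^ k * M) atTop (𝓝 (C + 0 * M)) :=
    ((tendsto_pow_atTop_nhds_zero_of_lt_one hε₀ hε₁).mul_const M).const_add C
  rw [zero_mul, add_zero] at hlim
  exact ge_of_tendsto' hlim h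

theorem rpow_mul_rpow_le_rpow_add {u v x p q : ℝ} (hu : 0 ≤ u) (hv : 0 ≤ v) (hux : u ≤ x)
    (hvx : v ≤ x) (hp : 0 ≤ p) (hq : 0 ≤ q) : u ^ p * v ^ q ≤ x ^ (p + q) := by
  rw [Real.rpow_add_of_nonneg (hu.trans hux) hp hq]
  gcongr
  exact Real.rpow_nonneg (hu.trans hux) p

theorem two_mul_half_rpow {x θ : ℝ} (hx : 0 ≤ x) : 2 * (x / 2) ^ θ = 2 ^ (1 - θ) * x ^ θ := by
  rw [Real.div_rpow hx zero_le_two, Real.rpow_sub zero_lt_two, Real.rpow_one]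
  field_simp

noncomputable def sewingConstant (θ : ℝ) : ℝ := (1 - 2 ^ (1 - θ))⁻¹

theorem sewingConstant_pos {θ : ℝ} (hθ : 1 < θ) : 0 < sewingConstant θ :=
  inv_pos.2 <| sub_pos.2 <| Real.rpow_lt_one_of_one_lt_of_neg one_lt_two (by linarith)

def HolderBoundOn (g : ℝ → ℝ → ℝ) (γ H a b : ℝ) : Prop :=
  ∀ s t, a ≤ s → s ≤ t → t ≤ b → g s t ≤ H * (t - s) ^ γ

namespace HolderBoundOn

variable {g g₁ g₂ : ℝ → ℝ → ℝ} {γ H H₁ H₂ a b : ℝ}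

theorem mono {H' : ℝ} (h : HolderBoundOn g γ H a b) (hH : H ≤ H') : HolderBoundOn g γ H' a b :=
  fun s t hs hst ht => (h s t hs hst ht).trans <| by gcongr

theorem mono_interval {a' b' : ℝ} (h : HolderBoundOn g γ H a' b') (ha : a' ≤ a) (hb : b ≤ b') :
    HolderBoundOn g γ H a b :=
  fun s t hs hst ht => h s t (ha.trans hs) hst (ht.trans hb)

theorem of_le (h : HolderBoundOn g₁ γ H a b)
    (hle : ∀ s t, a ≤ s → s ≤ t → t ≤ b → g₂ s t ≤ g₁ s t) : HolderBoundOn g₂ γ H a b :=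
  fun s t hs hst ht => (hle s t hs hst ht).trans (h s t hs hst ht)

theorem add (h₁ : HolderBoundOn g₁ γ H₁ a b) (h₂ : HolderBoundOn g₂ γ H₂ a b) :
    HolderBoundOn (fun s t => g₁ s t + g₂ s t) γ (H₁ + H₂) a b :=
  fun s t hs hst ht => by linarith [h₁ s t hs hst ht, h₂ s t hs hst ht]

theorem of_add_exponent {p : ℝ} (h : HolderBoundOn g (γ + p) H a b) (hγ : 0 ≤ γ) (hp : 0 ≤ p)
    (hH : 0 ≤ H) : HolderBoundOn g γ (H * (b - a) ^ p) a b := by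
  intro s t hs hst ht
  have hts : 0 ≤ t - s := sub_nonneg.2 hst
  calc g s t ≤ H * (t - s) ^ (γ + p) := h s t hs hst ht
    _ = H * (t - s) ^ p * (t - s) ^ γ := by rw [Real.rpow_add_of_nonneg hts hγ hp]; ring
    _ ≤ H * (b - a) ^ p * (t - s) ^ γ := by gcongr

theorem of_contraction {ε Q H₀ : ℝ} (hε₀ : 0 ≤ ε) (hε₁ : ε < 1) (hQ : 0 ≤ Q)
    (h₀ : HolderBoundOn g γ H₀ a b)
    (hstep : ∀ H, 0 ≤ H → HolderBoundOn g γ H a b → HolderBoundOn g γ (ε * H + Q) a b) :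
    HolderBoundOn g γ (Q / (1 - ε)) a b := by
  have hε : 1 - ε ≠ 0 := by linarith
  have hQε : 0 ≤ Q / (1 - ε) := div_nonneg hQ (by linarith)
  have hiter : ∀ k : ℕ, HolderBoundOn g γ (ε ^ k * max H₀ 0 + Q / (1 - ε)) a b := by
    intro k
    induction k with
    | zero => simpa using h₀.mono ((le_max_left H₀ 0).trans (le_add_of_nonneg_right hQε))
    | succ k ih =>
      convert hstep _ (by positivity) ih using 1
      field_simp
      ring
  intro s t hs hst ht
  refine le_of_forall_le_add_pow_mul hε₀ hε₁ (M := max H₀ 0 * (t - s) ^ γ) fun k => ?_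
  linarith [hiter k s t hs hst ht]

theorem sewing {θ A M : ℝ} (hθ : 1 < θ) (hγ : 1 < γ) (hA : 0 ≤ A)
    (hfine : HolderBoundOn g γ M a b)
    (hsplit : ∀ s t, a ≤ s → s ≤ t → t ≤ b →
      g s t ≤ g s ((s + t) / 2) + g ((s + t) / 2) t + A * (t - s) ^ θ) :
    HolderBoundOn g θ (sewingConstant θ * A) a b := by
  have hr : (2 : ℝ) ^ (1 - θ) < 1 := Real.rpow_lt_one_of_one_lt_of_neg one_lt_two (by linarith)
  have hr' : (2 : ℝ) ^ (1 - γ) < 1 := Real.rpow_lt_one_of_one_lt_of_neg one_lt_two (by linarith)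
  set C := sewingConstant θ * A
  have hC₀ : 0 ≤ C := mul_nonneg (sewingConstant_pos hθ).le hA
  have hC : C * 2 ^ (1 - θ) + A = C := by
    simp only [C, sewingConstant]
    field_simp [(sub_pos.2 hr).ne']
    ring
  have hiter : ∀ N : ℕ, ∀ s t, a ≤ s → s ≤ t → t ≤ b →
      g s t ≤ C * (t - s) ^ θ + (2 ^ (1 - γ)) ^ N * M * (t - s) ^ γ := by
    intro N
    induction N with
    | zero =>
      intro s t hs hst ht
      have : 0 ≤ C * (t - s) ^ θ := mul_nonneg hC₀ (Real.rpow_nonneg (sub_nonneg.2 hst) θ)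
      simp only [pow_zero, one_mul]
      linarith [hfine s t hs hst ht]
    | succ N ih =>
      intro s t hs hst ht
      have hts : 0 ≤ t - s := sub_nonneg.2 hst
      have h₁ := ih s ((s + t) / 2) hs (by linarith) (by linarith)
      have h₂ := ih ((s + t) / 2) t (by linarith) (by linarith) ht
      rw [show (s + t) / 2 - s = (t - s) / 2 by ring] at h₁
      rw [show t - (s + t) / 2 = (t - s) / 2 by ring] at h₂
      calc g s t ≤ C * (2 * ((t - s) / 2) ^ θ) + (2 ^ (1 - γ)) ^ N * M * (2 * ((t - s) / 2) ^ γ)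
            + A * (t - s) ^ θ := by linarith [hsplit s t hs hst ht]
        _ = (C * 2 ^ (1 - θ) + A) * (t - s) ^ θ + (2 ^ (1 - γ)) ^ (N + 1) * M * (t - s) ^ γ := by
          rw [two_mul_half_rpow hts, two_mul_half_rpow hts]; ring
        _ = _ := by rw [hC]
  intro s t hs hst ht
  refine le_of_forall_le_add_pow_mul (by positivity) hr' (M := M * (t - s) ^ γ) fun N => ?_
  linarith [hiter N s t hs hst ht]

theorem norm_le_norm_add {E : Type*} [SeminormedAddCommGroup E] {Z : ℝ → E} {s : ℝ}
    (h : HolderBoundOn (fun s t => ‖Z t - Z s‖) γ H a b) (hH : 0 ≤ H) (hγ : 0 ≤ γ)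
    (hs : a ≤ s) (hsb : s ≤ b) : ‖Z s‖ ≤ ‖Z a‖ + H * (b - a) ^ γ :=
  calc ‖Z s‖ ≤ ‖Z a‖ + ‖Z s - Z a‖ := norm_le_norm_add_norm_sub' _ _
    _ ≤ ‖Z a‖ + H * (s - a) ^ γ := by gcongr; exact h a s le_rfl hs hsb
    _ ≤ ‖Z a‖ + H * (b - a) ^ γ := by gcongr

end HolderBoundOn

structure C2Bounds {E G : Type*} [NormedAddCommGroup E] [NormedAddCommGroup G] (f : E → G) (c : ℝ) :
    Prop where
  norm_le : ∀ x, ‖f x‖ ≤ c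
  norm_sub_le : ∀ x y, ‖f x - f y‖ ≤ c * ‖x - y‖
  norm_second_difference_le : ∀ a a' b b',
    ‖f a' - f a - (f b' - f b)‖ ≤ c * ‖a' - a - (b' - b)‖ + c * ‖a - b‖ * ‖b' - b‖

section Calculus

variable {E G : Type*} [NormedAddCommGroup E] [NormedSpace ℝ E] [NormedAddCommGroup G]
  [NormedSpace ℝ G] {f : E → G} {c : ℝ}

theorem norm_sub_le_of_norm_fderiv_le (hf : Differentiable ℝ f) (h : ∀ x, ‖fderiv ℝ f x‖ ≤ c)
    (x y : E) : ‖f x - f y‖ ≤ c * ‖x - y‖ :=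
  convex_univ.norm_image_sub_le_of_norm_fderiv_le (fun z _ => hf z) (fun z _ => h z)
    (mem_univ y) (mem_univ x)

/-- Apply the mean value inequality to `x ↦ f (x + (a - b)) - f x` between `b` and `b'`. -/
theorem norm_second_difference_le_of_lipschitz_fderiv (hf : Differentiable ℝ f)
    (h₁ : ∀ x, ‖fderiv ℝ f x‖ ≤ c) (h₂ : ∀ x y, ‖fderiv ℝ f x - fderiv ℝ f y‖ ≤ c * ‖x - y‖)
    (a a' b b' : E) :
    ‖f a' - f a - (f b' - f b)‖ ≤ c * ‖a' - a - (b' - b)‖ + c * ‖a - b‖ * ‖b' - b‖ := by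
  set w := a - b
  have hg : ∀ x, HasFDerivAt (fun x => f (x + w) - f x) (fderiv ℝ f (x + w) - fderiv ℝ f x) x :=
    fun x => ((hf (x + w)).hasFDerivAt.comp x ((hasFDerivAt_id x).add_const w)).sub
      (hf x).hasFDerivAt
  have hshift : ‖f (b' + w) - f b' - (f (b + w) - f b)‖ ≤ c * ‖a - b‖ * ‖b' - b‖ :=
    convex_univ.norm_image_sub_le_of_norm_hasFDerivWithin_le (fun x _ => (hg x).hasFDerivWithinAt)
      (fun x _ => by simpa using h₂ (x + w) x) (mem_univ b) (mem_univ b')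
  have hba : b + w = a := by simp [w]
  calc ‖f a' - f a - (f b' - f b)‖
      = ‖(f a' - f (b' + w)) + (f (b' + w) - f b' - (f (b + w) - f b))‖ := by
        rw [hba]; congr 1; abel
    _ ≤ c * ‖a' - (b' + w)‖ + c * ‖a - b‖ * ‖b' - b‖ :=
        norm_add_le_of_le (norm_sub_le_of_norm_fderiv_le hf h₁ _ _) hshift
    _ = c * ‖a' - a - (b' - b)‖ + c * ‖a - b‖ * ‖b' - b‖ := by
        congr 3; simp only [w]; abel

theorem C2Bounds.of_iteratedFDeriv (hf : ContDiff ℝ 2 f)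
    (hC : ∀ i : ℕ, i ≤ 2 → ∀ x, ‖iteratedFDeriv ℝ i f x‖ ≤ c) : C2Bounds f c := by
  have hd : Differentiable ℝ f := hf.differentiable two_ne_zero
  have h₁ : ∀ x, ‖fderiv ℝ f x‖ ≤ c := fun x => by
    simpa only [norm_iteratedFDeriv_one] using hC 1 one_le_two x
  have h₂ : ∀ x, ‖fderiv ℝ (fderiv ℝ f) x‖ ≤ c := fun x => by
    rw [← norm_iteratedFDeriv_one, norm_iteratedFDeriv_fderiv]
    exact hC 2 le_rfl x
  have hd' : Differentiable ℝ (fderiv ℝ f) := (hf.fderiv_right le_rfl).differentiable one_ne_zero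
  exact ⟨fun x => by simpa using hC 0 zero_le_two x, norm_sub_le_of_norm_fderiv_le hd h₁,
    norm_second_difference_le_of_lipschitz_fderiv hd h₁ (norm_sub_le_of_norm_fderiv_le hd' h₂)⟩

end Calculus

section Davie

variable {E F : Type*} [NormedAddCommGroup E] [NormedSpace ℝ E] [NormedAddCommGroup F]
  [NormedSpace ℝ F] {f : E → F →L[ℝ] E} {X : ℝ → F} {Y : ℝ → E} {c K M H α a b : ℝ}

def davieRemainder (f : E → F →L[ℝ] E) (X : ℝ → F) (Y : ℝ → E) (s t : ℝ) : E :=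
  Y t - Y s - f (Y s) (X t - X s)

theorem davieRemainder_split (f : E → F →L[ℝ] E) (X : ℝ → F) (Y : ℝ → E) (s m t : ℝ) :
    davieRemainder f X Y s t = davieRemainder f X Y s m + davieRemainder f X Y m t
      + (f (Y m) - f (Y s)) (X t - X m) := by
  simp only [davieRemainder, map_sub, sub_apply]
  abel

theorem norm_davieRemainder_le (s m t : ℝ) :
    ‖davieRemainder f X Y s t‖ ≤ ‖davieRemainder f X Y s m‖ + ‖davieRemainder f X Y m t‖
      + ‖(f (Y m) - f (Y s)) (X t - X m)‖ := by
  rw [davieRemainder_split f X Y s m t]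
  exact norm_add₃_le

theorem HolderBoundOn.norm_sub_of_davieRemainder {A : ℝ} (hfb : ∀ x, ‖f x‖ ≤ c) (hc : 0 ≤ c)
    (hα : 0 ≤ α) (hA : 0 ≤ A)
    (hR : HolderBoundOn (fun s t => ‖davieRemainder f X Y s t‖) (2 * α) A a b)
    (hX : HolderBoundOn (fun s t => ‖X t - X s‖) α K a b) :
    HolderBoundOn (fun s t => ‖Y t - Y s‖) α (A * (b - a) ^ α + c * K) a b := by
  rw [two_mul] at hR
  have hfX : HolderBoundOn (fun s t => ‖f (Y s) (X t - X s)‖) α (c * K) a b :=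
    fun s t hs hst ht => calc
      _ ≤ ‖f (Y s)‖ * ‖X t - X s‖ := (f (Y s)).le_opNorm _
      _ ≤ c * (K * (t - s) ^ α) := mul_le_mul (hfb _) (hX s t hs hst ht) (norm_nonneg _) hc
      _ = _ := by ring
  refine ((hR.of_add_exponent hα hα hA).add hfX).of_le fun s t _ _ _ => ?_
  calc ‖Y t - Y s‖ = ‖davieRemainder f X Y s t + f (Y s) (X t - X s)‖ := by
        simp [davieRemainder]
    _ ≤ _ := norm_add_le _ _

theorem HolderBoundOn.davieRemainder_of_norm_sub (hLip : ∀ x y, ‖f x - f y‖ ≤ c * ‖x - y‖)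
    (hc : 0 ≤ c) (hK : 0 ≤ K) (hH : 0 ≤ H) (hα : 1 / 2 < α)
    (hR : HolderBoundOn (fun s t => ‖davieRemainder f X Y s t‖) (2 * α) M a b)
    (hX : HolderBoundOn (fun s t => ‖X t - X s‖) α K a b)
    (hY : HolderBoundOn (fun s t => ‖Y t - Y s‖) α H a b) :
    HolderBoundOn (fun s t => ‖davieRemainder f X Y s t‖) (2 * α)
      (sewingConstant (2 * α) * (c * K * H)) a b := by
  refine hR.sewing (by linarith) (by linarith) (by positivity) fun s t hs hst ht => ?_
  set m := (s + t) / 2 with hm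
  have hsm : s ≤ m := by linarith
  have hmt : m ≤ t := by linarith
  have hdefect : ‖(f (Y m) - f (Y s)) (X t - X m)‖ ≤ c * K * H * (t - s) ^ (2 * α) := calc
    _ ≤ ‖f (Y m) - f (Y s)‖ * ‖X t - X m‖ := (f (Y m) - f (Y s)).le_opNorm _
    _ ≤ c * (H * (m - s) ^ α) * (K * (t - m) ^ α) :=
        mul_le_mul ((hLip _ _).trans (by gcongr; exact hY s m hs hsm (hmt.trans ht)))
          (hX m t (hs.trans hsm) hmt ht) (norm_nonneg _)
          (mul_nonneg hc (mul_nonneg hH (Real.rpow_nonneg (sub_nonneg.2 hsm) α)))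
    _ = c * K * H * ((m - s) ^ α * (t - m) ^ α) := by ring
    _ ≤ c * K * H * (t - s) ^ (2 * α) := by
        gcongr
        rw [two_mul]
        exact rpow_mul_rpow_le_rpow_add (sub_nonneg.2 hsm) (sub_nonneg.2 hmt) (by linarith)
          (by linarith) (by linarith) (by linarith)
  linarith [norm_davieRemainder_le (f := f) (X := X) (Y := Y) s m t]

theorem holderBoundOn_norm_sub_of_davie (hf : C2Bounds f c) (hc : 0 ≤ c) (hK : 0 ≤ K)
    (hα : 1 / 2 < α) (hab : a ≤ b) (hX : HolderBoundOn (fun s t => ‖X t - X s‖) α K a b)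
    (hR : HolderBoundOn (fun s t => ‖davieRemainder f X Y s t‖) (2 * α) M a b)
    (hsmall : sewingConstant (2 * α) * (c * K) * (b - a) ^ α ≤ 1 / 2) :
    HolderBoundOn (fun s t => ‖Y t - Y s‖) α (2 * (c * K)) a b := by
  have hα₀ : 0 ≤ α := by linarith
  set ε := sewingConstant (2 * α) * (c * K) * (b - a) ^ α
  have hC := sewingConstant_pos (show 1 < 2 * α by linarith)
  have hε₀ : 0 ≤ ε := by
    have := sub_nonneg.2 hab
    positivity
  have h₀ := (hR.mono (le_max_left M 0)).norm_sub_of_davieRemainder hf.norm_le hc hα₀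
    (le_max_right M 0) hX
  refine (h₀.of_contraction (Q := c * K) hε₀ (by linarith) (by positivity)
    fun H hH hY => ?_).mono ?_
  · refine ((hR.davieRemainder_of_norm_sub hf.norm_sub_le hc hK hH hα hX hY
      ).norm_sub_of_davieRemainder hf.norm_le hc hα₀ (by positivity) hX).mono (le_of_eq ?_)
    simp only [ε]
    ring
  · rw [div_le_iff₀ (by linarith)]
    nlinarith [mul_nonneg hc hK]

end Davie

section Difference

variable {E F : Type*} [NormedAddCommGroup E] [NormedSpace ℝ E] [NormedAddCommGroup F]
  [NormedSpace ℝ F] {f : E → F →L[ℝ] E} {X Xt : ℝ → F} {Y Yt : ℝ → E}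
  {c K D H HY M Mt S T α β a b : ℝ}

theorem C2Bounds.norm_apply_sub_apply_le (hf : C2Bounds f c) (a a' b b' : E) (u v : F) :
    ‖(f a' - f a) u - (f b' - f b) v‖ ≤
      c * (‖a' - b' - (a - b)‖ + ‖a - b‖ * ‖b' - b‖) * ‖u‖ + c * ‖b' - b‖ * ‖u - v‖ := by
  calc ‖(f a' - f a) u - (f b' - f b) v‖
      = ‖(f a' - f a - (f b' - f b)) u + (f b' - f b) (u - v)‖ := by
        simp only [sub_apply, map_sub]
        abel_nf
    _ ≤ ‖f a' - f a - (f b' - f b)‖ * ‖u‖ + ‖f b' - f b‖ * ‖u - v‖ :=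
        norm_add_le_of_le (ContinuousLinearMap.le_opNorm _ _) (ContinuousLinearMap.le_opNorm _ _)
    _ ≤ _ := by
        gcongr
        · rw [sub_sub_sub_comm a']
          linarith [hf.norm_second_difference_le a a' b b']
        · exact hf.norm_sub_le b' b

theorem norm_davieRemainder_sub_le (s m t : ℝ) :
    ‖davieRemainder f X Y s t - davieRemainder f Xt Yt s t‖ ≤
      ‖davieRemainder f X Y s m - davieRemainder f Xt Yt s m‖
      + ‖davieRemainder f X Y m t - davieRemainder f Xt Yt m t‖
      + ‖(f (Y m) - f (Y s)) (X t - X m) - (f (Yt m) - f (Yt s)) (Xt t - Xt m)‖ := by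
  rw [davieRemainder_split f X Y s m t, davieRemainder_split f Xt Yt s m t]
  refine le_of_eq_of_le (congrArg norm ?_) norm_add₃_le
  abel

theorem norm_sub_sub_le_norm_davieRemainder_sub (s t : ℝ) :
    ‖Y t - Yt t - (Y s - Yt s)‖ ≤ ‖davieRemainder f X Y s t - davieRemainder f Xt Yt s t‖
      + ‖(f (Y s) - f (Yt s)) (X t - X s)‖ + ‖f (Yt s) (X t - Xt t - (X s - Xt s))‖ := by
  refine le_of_eq_of_le (congrArg norm ?_) norm_add₃_le
  simp only [davieRemainder, sub_apply, map_sub]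
  abel

theorem HolderBoundOn.davieRemainder_sub_of_norm_sub_sub (hf : C2Bounds f c) (hc : 0 ≤ c)
    (hK : 0 ≤ K) (hD : 0 ≤ D) (hHY : 0 ≤ HY) (hH : 0 ≤ H) (hαβ : 1 < α + β) (hβ : 0 ≤ β)
    (hβα : β ≤ α) (hab : a ≤ b) (hba : b - a ≤ 1)
    (hR : HolderBoundOn (fun s t => ‖davieRemainder f X Y s t - davieRemainder f Xt Yt s t‖)
      (2 * α) M a b)
    (hX : HolderBoundOn (fun s t => ‖X t - X s‖) α K a b)
    (hDX : HolderBoundOn (fun s t => ‖X t - Xt t - (X s - Xt s)‖) β D a b)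
    (hYt : HolderBoundOn (fun s t => ‖Yt t - Yt s‖) α HY a b)
    (hZ : HolderBoundOn (fun s t => ‖Y t - Yt t - (Y s - Yt s)‖) β H a b) :
    HolderBoundOn (fun s t => ‖davieRemainder f X Y s t - davieRemainder f Xt Yt s t‖) (α + β)
      (sewingConstant (α + β) *
        (c * K * H + c * HY * (K * (‖Y a - Yt a‖ + H * (b - a) ^ β) + D))) a b := by
  set S := ‖Y a - Yt a‖ + H * (b - a) ^ β
  have hα : 0 ≤ α := hβ.trans hβα
  have := sub_nonneg.2 hab
  refine hR.sewing hαβ (by linarith) (by positivity) fun s t hs hst ht => ?_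
  set m := (s + t) / 2 with hm
  have hsm : s ≤ m := by linarith
  have hmt : m ≤ t := by linarith
  have hS : ‖Y s - Yt s‖ ≤ S :=
    HolderBoundOn.norm_le_norm_add (Z := Y - Yt) hZ hH hβ hs (hst.trans ht)
  have hpow : ∀ p q : ℝ, 0 ≤ p → 0 ≤ q → (m - s) ^ p * (t - m) ^ q ≤ (t - s) ^ (p + q) :=
    fun p q hp hq => rpow_mul_rpow_le_rpow_add (by linarith) (by linarith) (by linarith)
      (by linarith) hp hq
  have hαα : (t - s) ^ (α + α) ≤ (t - s) ^ (α + β) :=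
    Real.rpow_le_rpow_of_exponent_ge' (by linarith) (by linarith) (by linarith) (by linarith)
  have hdefect : ‖(f (Y m) - f (Y s)) (X t - X m) - (f (Yt m) - f (Yt s)) (Xt t - Xt m)‖ ≤
      c * K * H * (t - s) ^ (α + β) + c * K * S * HY * (t - s) ^ (α + β)
        + c * HY * D * (t - s) ^ (α + β) := by
    calc _ ≤ c * (‖Y m - Yt m - (Y s - Yt s)‖ + ‖Y s - Yt s‖ * ‖Yt m - Yt s‖) * ‖X t - X m‖
          + c * ‖Yt m - Yt s‖ * ‖X t - X m - (Xt t - Xt m)‖ := hf.norm_apply_sub_apply_le ..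
      _ ≤ c * (H * (m - s) ^ β + S * (HY * (m - s) ^ α)) * (K * (t - m) ^ α)
          + c * (HY * (m - s) ^ α) * (D * (t - m) ^ β) := by
        rw [sub_sub_sub_comm (X t)]
        gcongr
        · exact hZ s m hs hsm (hmt.trans ht)
        · exact hYt s m hs hsm (hmt.trans ht)
        · exact hX m t (hs.trans hsm) hmt ht
        · exact hYt s m hs hsm (hmt.trans ht)
        · exact hDX m t (hs.trans hsm) hmt ht
      _ = c * K * H * ((m - s) ^ β * (t - m) ^ α) + c * K * S * HY * ((m - s) ^ α * (t - m) ^ α)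
          + c * HY * D * ((m - s) ^ α * (t - m) ^ β) := by ring
      _ ≤ _ := by
        gcongr
        · exact (hpow β α hβ hα).trans_eq (by rw [add_comm])
        · exact (hpow α α hα hα).trans hαα
        · exact hpow α β hα hβ
  linarith [norm_davieRemainder_sub_le (f := f) (X := X) (Xt := Xt) (Y := Y) (Yt := Yt) s m t]

theorem HolderBoundOn.norm_sub_sub_of_davieRemainder_sub {A : ℝ} (hf : C2Bounds f c) (hc : 0 ≤ c)
    (hK : 0 ≤ K) (hA : 0 ≤ A) (hβ : 0 ≤ β) (hβα : β ≤ α) (hab : a ≤ b)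
    (hR : HolderBoundOn (fun s t => ‖davieRemainder f X Y s t - davieRemainder f Xt Yt s t‖)
      (α + β) A a b)
    (hX : HolderBoundOn (fun s t => ‖X t - X s‖) α K a b)
    (hDX : HolderBoundOn (fun s t => ‖X t - Xt t - (X s - Xt s)‖) β D a b)
    (hS : ∀ s, a ≤ s → s ≤ b → ‖Y s - Yt s‖ ≤ S) :
    HolderBoundOn (fun s t => ‖Y t - Yt t - (Y s - Yt s)‖) β
      (A * (b - a) ^ α + c * S * K * (b - a) ^ (α - β) + c * D) a b := by
  have hα : 0 ≤ α := hβ.trans hβα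
  have hS₀ : 0 ≤ S := (norm_nonneg _).trans (hS a le_rfl hab)
  rw [add_comm] at hR
  have hfX : HolderBoundOn (fun s t => ‖(f (Y s) - f (Yt s)) (X t - X s)‖) β
      (c * S * K * (b - a) ^ (α - β)) a b := by
    refine HolderBoundOn.of_add_exponent ?_ hβ (sub_nonneg.2 hβα) (by positivity)
    rw [add_sub_cancel]
    intro s t hs hst ht
    calc _ ≤ ‖f (Y s) - f (Yt s)‖ * ‖X t - X s‖ := ContinuousLinearMap.le_opNorm _ _
      _ ≤ c * S * (K * (t - s) ^ α) :=
          mul_le_mul ((hf.norm_sub_le _ _).trans (by gcongr; exact hS s hs (hst.trans ht)))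
            (hX s t hs hst ht) (norm_nonneg _) (by positivity)
      _ = _ := by ring
  have hfDX : HolderBoundOn (fun s t => ‖f (Yt s) (X t - Xt t - (X s - Xt s))‖) β (c * D) a b :=
    fun s t hs hst ht => calc
      _ ≤ ‖f (Yt s)‖ * ‖X t - Xt t - (X s - Xt s)‖ := ContinuousLinearMap.le_opNorm _ _
      _ ≤ c * (D * (t - s) ^ β) := mul_le_mul (hf.norm_le _) (hDX s t hs hst ht) (norm_nonneg _) hc
      _ = _ := by ring
  exact (((hR.of_add_exponent hβ hα hA).add hfX).add hfDX).of_le fun s t _ _ _ =>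
    norm_sub_sub_le_norm_davieRemainder_sub s t

theorem HolderBoundOn.norm_sub_sub_contraction (hf : C2Bounds f c) (hc : 0 ≤ c) (hK : 0 ≤ K)
    (hD : 0 ≤ D) (hHY : 0 ≤ HY) (hH : 0 ≤ H) (hαβ : 1 < α + β) (hβ : 0 ≤ β) (hβα : β ≤ α)
    (hab : a ≤ b) (hba : b - a ≤ 1)
    (hZ : HolderBoundOn (fun s t => ‖Y t - Yt t - (Y s - Yt s)‖) β H a b)
    (hR : HolderBoundOn (fun s t => ‖davieRemainder f X Y s t - davieRemainder f Xt Yt s t‖)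
      (2 * α) M a b)
    (hX : HolderBoundOn (fun s t => ‖X t - X s‖) α K a b)
    (hDX : HolderBoundOn (fun s t => ‖X t - Xt t - (X s - Xt s)‖) β D a b)
    (hYt : HolderBoundOn (fun s t => ‖Yt t - Yt s‖) α HY a b) :
    HolderBoundOn (fun s t => ‖Y t - Yt t - (Y s - Yt s)‖) β
      (c * (1 + K) * (1 + sewingConstant (α + β) * (1 + HY)) * (b - a) ^ α * H
        + c * (1 + K) * (1 + sewingConstant (α + β) * (1 + HY)) * (‖Y a - Yt a‖ + D)) a b := by
  have hα : 0 ≤ α := hβ.trans hβα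
  set C := sewingConstant (α + β)
  have hC : 0 < C := sewingConstant_pos hαβ
  set κ := c * (1 + K) * (1 + C * (1 + HY))
  set z := ‖Y a - Yt a‖
  set p := (b - a) ^ α
  set q := (b - a) ^ β
  set r := (b - a) ^ (α - β)
  have hba₀ : 0 ≤ b - a := sub_nonneg.2 hab
  have hqr : q * r = p := by
    rw [← Real.rpow_add_of_nonneg hba₀ hβ (sub_nonneg.2 hβα), add_sub_cancel]
  have hp : p ≤ 1 := Real.rpow_le_one hba₀ hba hα
  have hq : q ≤ 1 := Real.rpow_le_one hba₀ hba hβ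
  have hr : r ≤ 1 := Real.rpow_le_one hba₀ hba (sub_nonneg.2 hβα)
  refine ((hR.davieRemainder_sub_of_norm_sub_sub hf hc hK hD hHY hH hαβ hβ hβα hab hba hX hDX
    hYt hZ).norm_sub_sub_of_davieRemainder_sub hf hc hK (by positivity) hβ hβα hab hX hDX
    fun s hs hsb => hZ.norm_le_norm_add hH hβ hs hsb).mono ?_
  have hcK : c * K ≤ c * (1 + K) := by nlinarith
  have hc₁ : c ≤ c * (1 + K) := by nlinarith
  have hCp : C * HY * p ≤ C * HY := mul_le_of_le_one_right (by positivity) hp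
  have hCq : C * HY * q ≤ C * HY := mul_le_of_le_one_right (by positivity) hq
  have hκ₁ : c * K * (1 + C + C * HY * q) ≤ κ :=
    mul_le_mul hcK (by linarith) (by positivity) (by positivity)
  have hκ₂ : c * K * (C * HY * p + r) ≤ κ :=
    mul_le_mul hcK (by linarith) (by positivity) (by positivity)
  have hκ₃ : c * (C * HY * p + 1) ≤ κ :=
    mul_le_mul hc₁ (by linarith) (by positivity) (by positivity)
  calc _ = p * H * (c * K * (1 + C + C * HY * q)) + z * (c * K * (C * HY * p + r))
        + D * (c * (C * HY * p + 1)) := by linear_combination (c * H * K) * hqr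
    _ ≤ p * H * κ + z * κ + D * κ := by gcongr
    _ = κ * p * H + κ * (z + D) := by ring

theorem holderBoundOn_norm_sub_sub_of_apriori (hf : C2Bounds f c) (hc : 0 ≤ c) (hK : 0 ≤ K)
    (hD : 0 ≤ D) (hHY : 0 ≤ HY) (hαβ : 1 < α + β) (hβ : 0 ≤ β) (hβα : β ≤ α) (hab : a ≤ b)
    (hba : b - a ≤ 1)
    (hR : HolderBoundOn (fun s t => ‖davieRemainder f X Y s t - davieRemainder f Xt Yt s t‖)
      (2 * α) M a b)
    (hX : HolderBoundOn (fun s t => ‖X t - X s‖) α K a b)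
    (hDX : HolderBoundOn (fun s t => ‖X t - Xt t - (X s - Xt s)‖) β D a b)
    (hY : HolderBoundOn (fun s t => ‖Y t - Y s‖) α HY a b)
    (hYt : HolderBoundOn (fun s t => ‖Yt t - Yt s‖) α HY a b)
    (hsmall : c * (1 + K) * (1 + sewingConstant (α + β) * (1 + HY)) * (b - a) ^ α ≤ 1 / 2) :
    HolderBoundOn (fun s t => ‖Y t - Yt t - (Y s - Yt s)‖) β
      (2 * (c * (1 + K) * (1 + sewingConstant (α + β) * (1 + HY))) * (‖Y a - Yt a‖ + D))
      a b := by
  have := sewingConstant_pos hαβ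
  have := sub_nonneg.2 hab
  set κ := c * (1 + K) * (1 + sewingConstant (α + β) * (1 + HY))
  have h₀ : HolderBoundOn (fun s t => ‖Y t - Yt t - (Y s - Yt s)‖) β
      ((HY + HY) * (b - a) ^ (α - β)) a b := by
    refine HolderBoundOn.of_add_exponent ?_ hβ (sub_nonneg.2 hβα) (by positivity)
    rw [add_sub_cancel]
    exact (hY.add hYt).of_le fun s t _ _ _ => by rw [sub_sub_sub_comm]; exact norm_sub_le _ _
  refine (h₀.of_contraction (by positivity) (by linarith) (by positivity) fun H hH hZ =>
    hZ.norm_sub_sub_contraction hf hc hK hD hHY hH hαβ hβ hβα hab hba hR hX hDX hYt).mono ?_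
  rw [div_le_iff₀ (by linarith)]
  nlinarith [mul_nonneg (by positivity : 0 ≤ κ) (by positivity : 0 ≤ ‖Y a - Yt a‖ + D)]

theorem holderBoundOn_norm_sub_sub_of_davie (hf : C2Bounds f c) (hc : 0 ≤ c) (hK : 0 ≤ K)
    (hD : 0 ≤ D) (hαβ : 1 < α + β) (hβ : 0 ≤ β) (hβα : β ≤ α)
    (hX : HolderBoundOn (fun s t => ‖X t - X s‖) α K 0 T)
    (hXt : HolderBoundOn (fun s t => ‖Xt t - Xt s‖) α K 0 T)
    (hDX : HolderBoundOn (fun s t => ‖X t - Xt t - (X s - Xt s)‖) β D 0 T)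
    (hR : HolderBoundOn (fun s t => ‖davieRemainder f X Y s t‖) (2 * α) M 0 T)
    (hRt : HolderBoundOn (fun s t => ‖davieRemainder f Xt Yt s t‖) (2 * α) Mt 0 T)
    (ha : 0 ≤ a) (hab : a ≤ b) (hb : b ≤ T) (hba : b - a ≤ 1)
    (hsmall : (sewingConstant (2 * α) * (c * K)
      + c * (1 + K) * (1 + sewingConstant (α + β) * (1 + 2 * (c * K)))) * (b - a) ^ α ≤ 1 / 2) :
    HolderBoundOn (fun s t => ‖Y t - Yt t - (Y s - Yt s)‖) β
      (2 * (c * (1 + K) * (1 + sewingConstant (α + β) * (1 + 2 * (c * K)))) * (‖Y a - Yt a‖ + D))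
      a b := by
  have hα : 1 / 2 < α := by linarith
  have h₁ : 0 ≤ sewingConstant (2 * α) * (c * K) * (b - a) ^ α := by
    have := sewingConstant_pos (show 1 < 2 * α by linarith)
    have := sub_nonneg.2 hab
    positivity
  have h₂ : 0 ≤ c * (1 + K) * (1 + sewingConstant (α + β) * (1 + 2 * (c * K))) * (b - a) ^ α := by
    have := sewingConstant_pos hαβ
    have := sub_nonneg.2 hab
    positivity
  rw [add_mul] at hsmall
  exact holderBoundOn_norm_sub_sub_of_apriori hf hc hK hD (by positivity) hαβ hβ hβα hab hba
    (((hR.add hRt).of_le fun s t _ _ _ => norm_sub_le _ _).mono_interval ha hb)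
    (hX.mono_interval ha hb) (hDX.mono_interval ha hb)
    (holderBoundOn_norm_sub_of_davie hf hc hK hα hab (hX.mono_interval ha hb)
      (hR.mono_interval ha hb) (by linarith))
    (holderBoundOn_norm_sub_of_davie hf hc hK hα hab (hXt.mono_interval ha hb)
      (hRt.mono_interval ha hb) (by linarith))
    (by linarith)

end Difference

theorem exists_mul_rpow_le (C : ℝ) {γ ε : ℝ} (hγ : 0 < γ) (hε : 0 < ε) :
    ∃ τ, 0 < τ ∧ τ ≤ 1 ∧ C * τ ^ γ ≤ ε := by
  have hlim : Tendsto (fun τ : ℝ => C * τ ^ γ) (𝓝[>] 0) (𝓝 0) := by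
    have := ((Real.continuousAt_rpow_const 0 γ (Or.inr hγ.le)).tendsto.const_mul C).mono_left
      (nhdsWithin_le_nhds (s := Ioi 0))
    rwa [Real.zero_rpow hγ.ne', mul_zero] at this
  obtain ⟨τ, hτ, hτC⟩ :=
    (Filter.Eventually.and (Ioc_mem_nhdsGT one_pos) (hlim.eventually (ge_mem_nhds hε))).exists
  exact ⟨τ, hτ.1, hτ.2, hτC⟩

section Globalization

variable {E : Type*} [SeminormedAddCommGroup E] {Z : ℝ → E} {T τ : ℝ}

/-- Discrete Grönwall along a chain of `⌈T / τ⌉` intervals of length at most `τ`. -/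
theorem norm_add_le_pow_of_norm_sub_le {L D : ℝ} (hτ : 0 < τ) (hL : 0 ≤ L)
    (h : ∀ a b, 0 ≤ a → a ≤ b → b ≤ T → b - a ≤ τ → ‖Z b - Z a‖ ≤ L * (‖Z a‖ + D))
    {u : ℝ} (hu : 0 ≤ u) (huT : u ≤ T) : ‖Z u‖ + D ≤ (1 + L) ^ ⌈T / τ⌉₊ * (‖Z 0‖ + D) := by
  suffices hchain : ∀ i : ℕ, ∀ u, 0 ≤ u → u ≤ T → u ≤ i * τ →
      ‖Z u‖ + D ≤ (1 + L) ^ i * (‖Z 0‖ + D) by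
    refine hchain _ u hu huT (huT.trans ?_)
    rw [← div_le_iff₀ hτ]
    exact Nat.le_ceil _
  intro i
  induction i with
  | zero =>
    intro u hu _ hui
    rw [le_antisymm (by simpa using hui) hu, pow_zero, one_mul]
  | succ i ih =>
    intro u hu huT hui
    set a := max (u - τ) 0
    have hau : a ≤ u := max_le (by linarith) hu
    have hai : a ≤ i * τ := max_le (by push_cast at hui; linarith) (by positivity)
    calc ‖Z u‖ + D ≤ ‖Z a‖ + ‖Z u - Z a‖ + D := by gcongr; exact norm_le_norm_add_norm_sub' _ _
      _ ≤ (1 + L) * (‖Z a‖ + D) := by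
        linarith [h a u (le_max_right _ _) hau huT (by linarith [le_max_left (u - τ) 0])]
      _ ≤ (1 + L) * ((1 + L) ^ i * (‖Z 0‖ + D)) := by
        gcongr
        exact ih a (le_max_right _ _) (hau.trans huT) hai
      _ = (1 + L) ^ (i + 1) * (‖Z 0‖ + D) := by ring

theorem HolderBoundOn.of_local {A S β : ℝ} (hτ : 0 < τ) (hβ : 0 ≤ β)
    (hloc : ∀ s t, 0 ≤ s → s ≤ t → t ≤ T → t - s ≤ τ → ‖Z t - Z s‖ ≤ A * (t - s) ^ β)
    (hsup : ∀ u, 0 ≤ u → u ≤ T → ‖Z u‖ ≤ S) :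
    HolderBoundOn (fun s t => ‖Z t - Z s‖) β (max A (2 * S / τ ^ β)) 0 T := by
  intro s t hs hst ht
  rcases le_or_gt (t - s) τ with hshort | hlong
  · exact (hloc s t hs hst ht hshort).trans (by gcongr; exact le_max_left _ _)
  have hτβ : 0 < τ ^ β := Real.rpow_pos_of_pos hτ β
  have hS : 0 ≤ S := (norm_nonneg _).trans (hsup s hs (hst.trans ht))
  calc ‖Z t - Z s‖ ≤ 2 * S / τ ^ β * τ ^ β := by
        rw [div_mul_cancel₀ _ hτβ.ne']
        linarith [norm_sub_le (Z t) (Z s), hsup t (hs.trans hst) ht, hsup s hs (hst.trans ht)]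
    _ ≤ max A (2 * S / τ ^ β) * (t - s) ^ β := by
        gcongr
        · exact le_max_right _ _

theorem HolderBoundOn.of_forall_subinterval {κ D β : ℝ} (hτ : 0 < τ) (hβ : 0 ≤ β) (hκ : 0 ≤ κ)
    (hD : 0 ≤ D)
    (hloc : ∀ a b, 0 ≤ a → a ≤ b → b ≤ T → b - a ≤ τ →
      HolderBoundOn (fun s t => ‖Z t - Z s‖) β (κ * (‖Z a‖ + D)) a b) :
    HolderBoundOn (fun s t => ‖Z t - Z s‖) β
      ((κ + 2 / τ ^ β) * (1 + κ * τ ^ β) ^ ⌈T / τ⌉₊ * (‖Z 0‖ + D)) 0 T := by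
  set G := (1 + κ * τ ^ β) ^ ⌈T / τ⌉₊
  set W := ‖Z 0‖ + D
  have hsup : ∀ u, 0 ≤ u → u ≤ T → ‖Z u‖ + D ≤ G * W := fun u hu huT =>
    norm_add_le_pow_of_norm_sub_le hτ (by positivity) (fun a b ha hab hb hba =>
      (hloc a b ha hab hb hba a b le_rfl hab le_rfl).trans (by rw [mul_right_comm]; gcongr)) hu huT
  refine (HolderBoundOn.of_local (A := κ * (G * W)) (S := G * W) hτ hβ
    (fun s t hs hst ht hts => (hloc s t hs hst ht hts s t le_rfl hst le_rfl).trans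
      (by gcongr; linarith [hsup s hs (hst.trans ht)]))
    (fun u hu huT => by linarith [hsup u hu huT])).mono ?_
  rw [mul_assoc, add_mul, show 2 * (G * W) / τ ^ β = 2 / τ ^ β * (G * W) by ring]
  exact max_le (le_add_of_nonneg_right (by positivity)) (le_add_of_nonneg_left (by positivity))

end Globalization

theorem young_ode_solution_map_continuity
    (α αt T K : ℝ) (hαt1 : 1 / 2 < αt) (hαt2 : αt < α)
    (hT : 0 < T) (hK : 0 < K) (d n : ℕ) (Cf : ℝ) :
    ∃ CK : ℝ, 0 < CK ∧
      ∀ (f : (Fin n → ℝ) → ((Fin d → ℝ) →L[ℝ] (Fin n → ℝ))),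
        ContDiff ℝ 2 f →
        (∀ i : ℕ, i ≤ 2 → ∀ x, ‖iteratedFDeriv ℝ i f x‖ ≤ Cf) →
      ∀ (X Xt : ℝ → (Fin d → ℝ)),
        (∀ s t : ℝ, 0 ≤ s → s ≤ t → t ≤ T → ‖X t - X s‖ ≤ K * (t - s) ^ α) →
        (∀ s t : ℝ, 0 ≤ s → s ≤ t → t ≤ T → ‖Xt t - Xt s‖ ≤ K * (t - s) ^ α) →
      ∀ (y yt : Fin n → ℝ) (Y Yt : ℝ → (Fin n → ℝ)),
        -- `Y` solves `Y_t = y + ∫_0^t f(Y_s) dX_s` in Davie's sense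
        Y 0 = y →
        (∃ M : ℝ, ∀ s t : ℝ, 0 ≤ s → s ≤ t → t ≤ T →
            ‖Y t - Y s - f (Y s) (X t - X s)‖ ≤ M * (t - s) ^ (2 * α)) →
        -- `Ỹ` solves `Ỹ_t = ỹ + ∫_0^t f(Ỹ_s) dX̃_s` in Davie's sense
        Yt 0 = yt →
        (∃ M : ℝ, ∀ s t : ℝ, 0 ≤ s → s ≤ t → t ≤ T →
            ‖Yt t - Yt s - f (Yt s) (Xt t - Xt s)‖ ≤ M * (t - s) ^ (2 * α)) →
      -- for any bound `ΔX` on the `α̃`-Hölder seminorm of `X - X̃` :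
      ∀ ΔX : ℝ,
        (∀ s t : ℝ, 0 ≤ s → s ≤ t → t ≤ T →
            ‖X t - Xt t - (X s - Xt s)‖ ≤ ΔX * (t - s) ^ αt) →
        ∀ s t : ℝ, 0 ≤ s → s ≤ t → t ≤ T →
          ‖Y t - Yt t - (Y s - Yt s)‖ ≤ CK * (‖y - yt‖ + ΔX) * (t - s) ^ αt := by
  have hα : 0 < α := by linarith
  set c := max Cf 0
  set κ := c * (1 + K) * (1 + sewingConstant (α + αt) * (1 + 2 * (c * K)))
  have hC₁ := sewingConstant_pos (show 1 < 2 * α by linarith)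
  have hC₂ := sewingConstant_pos (show 1 < α + αt by linarith)
  obtain ⟨τ, hτ, hτ₁, hτsmall⟩ :=
    exists_mul_rpow_le (sewingConstant (2 * α) * (c * K) + κ) hα one_half_pos
  refine ⟨(2 * κ + 2 / τ ^ αt) * (1 + 2 * κ * τ ^ αt) ^ ⌈T / τ⌉₊, by positivity, ?_⟩
  rintro f hf hCf X Xt hX hXt y yt Y Yt rfl ⟨M, hM⟩ rfl ⟨Mt, hMt⟩ ΔX hDX
  have hD : 0 ≤ ΔX := nonneg_of_mul_nonneg_left
    ((norm_nonneg _).trans (hDX 0 T le_rfl hT.le le_rfl))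
    (Real.rpow_pos_of_pos (by simpa using hT) _)
  exact HolderBoundOn.of_forall_subinterval (Z := Y - Yt) hτ (by linarith) (by positivity) hD
    fun a b ha hab hb hba => holderBoundOn_norm_sub_sub_of_davie
      (.of_iteratedFDeriv hf fun i hi x => (hCf i hi x).trans (le_max_left _ _)) (le_max_right _ _)
      hK.le hD (by linarith) (by linarith) hαt2.le hX hXt hDX hM hMt ha hab hb (hba.trans hτ₁)
      (le_trans (by gcongr) hτsmall)
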